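/- arXiv:1911.01089 — 2 statements merged into one kernel-verified Lean document; each statement's English description precedes it below -/
import Mathlib

section
/- Let p be a prime and let A be a complete discrete valuation ring of characteristic p with residue field F_p. Then A is isomorphic as a ring to the formal power series ring F_p[[X]]. -/
/-!
Pick a uniformizer `π`. Since `A` is `𝔪`-adically complete, power series over a coefficient
field `k ⊆ A` can be evaluated at `π`, giving a ring map `φ : k⟦X⟧ → A` with `X ↦ π`.
It is injective because a nonzero power series is `X ^ n` times a unit and `π ≠ 0` in the
domain `A`; it is surjective because it is so modulo `(π) = 𝔪` (the residue field is `k`),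
`k⟦X⟧` is `X`-adically complete and `A` is `π`-adically separated. For residue field `𝔽_p`
the prime field is a coefficient field, as `𝔽_p → A → 𝔽_p` is the only ring map
`𝔽_p → 𝔽_p`.
-/

open PowerSeries IsLocalRing

theorem IsAdicComplete.exists_powerSeries_ringHom {R A : Type*} [CommRing R] [CommRing A]
    {I : Ideal A} [IsAdicComplete I A] (c : R →+* A) {a : A} (ha : a ∈ I) :
    ∃ φ : R⟦X⟧ →+* A, φ X = a ∧ φ.comp C = c := by
  let : WithIdeal A := ⟨I⟩
  let : UniformSpace R := ⊥
  obtain ⟨_, _⟩ := (show IsAdic I from rfl).isAdicComplete_iff.mp ‹_›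
  have hc : Continuous c := continuous_of_discreteTopology
  have hnil : HasEval a := WithIdeal.isTopologicallyNilpotent_of_mem ha
  exact ⟨eval₂Hom hc hnil, by simp [coe_eval₂Hom], by ext; simp [coe_eval₂Hom]⟩

theorem PowerSeries.injective_of_map_X_ne_zero {k A : Type*} [Field k] [CommRing A] [IsDomain A]
    (φ : k⟦X⟧ →+* A) (hX : φ X ≠ 0) : Function.Injective φ := by
  refine (injective_iff_map_eq_zero φ).mpr fun f hf ↦ by_contra fun hf0 ↦ ?_
  rw [← X_pow_order_mul_divXPowOrder (f := f), map_mul, map_pow] at hf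
  exact mul_ne_zero (pow_ne_zero _ hX)
    ((isUnit_divided_by_X_pow_order hf0).map φ).ne_zero hf

theorem PowerSeries.surjective_of_surjective_mod_map_X {R A : Type*} [CommRing R] [CommRing A]
    (φ : R⟦X⟧ →+* A) [IsHausdorff (Ideal.span {φ X}) A]
    (h : Function.Surjective ((Ideal.Quotient.mk (Ideal.span {φ X})).comp (φ.comp C))) :
    Function.Surjective φ := by
  have hmap : (Ideal.span {X} : Ideal R⟦X⟧).map φ = Ideal.span {φ X} := by
    rw [Ideal.map_span, Set.image_singleton]
  have : IsHausdorff ((Ideal.span {X} : Ideal R⟦X⟧).map φ) A := hmap ▸ ‹_›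
  rw [← hmap] at h
  refine surjective_of_mk_map_comp_surjective φ (I := Ideal.span {X}) fun y ↦ ?_
  obtain ⟨r, rfl⟩ := h y
  exact ⟨C r, rfl⟩

theorem IsDiscreteValuationRing.nonempty_ringEquiv_powerSeries {k A : Type*} [Field k]
    [CommRing A] [IsDomain A] [IsDiscreteValuationRing A]
    [IsAdicComplete (IsLocalRing.maximalIdeal A) A] (c : k →+* A)
    (hc : Function.Surjective ((residue A).comp c)) : Nonempty (A ≃+* k⟦X⟧) := by
  obtain ⟨π, hπ⟩ := IsDiscreteValuationRing.exists_irreducible A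
  have hm : IsLocalRing.maximalIdeal A = Ideal.span {π} :=
    (IsDiscreteValuationRing.irreducible_iff_uniformizer π).mp hπ
  obtain ⟨φ, hφX, hφC⟩ := IsAdicComplete.exists_powerSeries_ringHom c
    (hm ▸ Ideal.mem_span_singleton_self π)
  have : IsHausdorff (Ideal.span {φ X}) A := hφX ▸ hm ▸ inferInstance
  have hinj := injective_of_map_X_ne_zero φ (hφX ▸ hπ.ne_zero)
  have hsurj := surjective_of_surjective_mod_map_X φ (by rwa [hφC, hφX, ← hm])
  exact ⟨(RingEquiv.ofBijective φ ⟨hinj, hsurj⟩).symm⟩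

theorem IsLocalRing.surjective_residue_comp_castHom {p : ℕ} {A : Type*} [CommRing A]
    [IsLocalRing A] [CharP A p] (e : ResidueField A ≃+* ZMod p) :
    Function.Surjective ((residue A).comp (ZMod.castHom (dvd_refl p) A)) := by
  intro y
  refine ⟨e y, e.injective ?_⟩
  exact RingHom.congr_fun (Subsingleton.elim ((e : ResidueField A →+* ZMod p).comp
    ((residue A).comp (ZMod.castHom (dvd_refl p) A))) (RingHom.id _)) (e y)

/-- A complete discrete valuation ring of characteristic `p` with residue field `F_p`
is isomorphic as a ring to the formal power series ring `F_p[[X]]`. -/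
theorem stmt7 (p : ℕ) (hp : p.Prime) (A : Type*) [CommRing A] [IsDomain A]
    [IsDiscreteValuationRing A] [CharP A p]
    [IsAdicComplete (IsLocalRing.maximalIdeal A) A]
    (hres : Nonempty (IsLocalRing.ResidueField A ≃+* ZMod p)) :
    Nonempty (A ≃+* PowerSeries (ZMod p)) := by
  have : Fact p.Prime := ⟨hp⟩
  obtain ⟨e⟩ := hres
  exact IsDiscreteValuationRing.nonempty_ringEquiv_powerSeries _
    (surjective_residue_comp_castHom e)
end

section
/- Let p be a prime, d ≥ 1, m ≥ 2, and let R be a graded (commutative) F_p-algebra such that R_{kd} is a one-dimensional F_p-vector space for 0 ≤ k ≤ m and R_i = 0 for all other i. Suppose there exists x ∈ R_d with x^{m−1} ≠ 0. Then exactly one of the following holds: (1) x^m ≠ 0 and R is isomorphic as a graded F_p-algebra to F_p[x]/(x^{m+1}) with x in degree d; or (2) x^m = 0 and R is isomorphic to the square-zero extension F_p[x]/(x^m) ⊕ F_p·w, where w has degree md and satisfies w·x = 0 and w² = 0. -/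
/-!
Comparing homogeneous components of degree `k * d` shows that a polynomial `f` with
`f(x) = 0` has `f.coeff k • x ^ k = 0` for every `k`, so the kernel of evaluation at `x` is
`(X ^ n)` for the nilpotency index `n` of `x`. Every graded piece `R_{kd}` with `k < m` is
spanned by `x ^ k`, and `R_{md}` by any nonzero `w`, so `R` is spanned by the image of
evaluation together with `w`. Since `R` vanishes above degree `md`, `x ^ (m + 1) = 0`; if
`x ^ m ≠ 0` one may take `w = x ^ m` and evaluation is onto `R`, while if `x ^ m = 0`,
degree reasons force `w * x = 0` and `w * w = 0`.
-/

open Polynomial DirectSum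

section GradedAlgebra

variable {K A : Type*}

theorem coe_decompose_aeval_of_mem [CommSemiring K] [Semiring A] [Algebra K A]
    (𝒜 : ℕ → Submodule K A) [GradedAlgebra 𝒜] {d : ℕ} (hd : 0 < d) {x : A} (hx : x ∈ 𝒜 d)
    (f : K[X]) (k : ℕ) : (decompose 𝒜 (aeval x f) (k * d) : A) = f.coeff k • x ^ k := by
  have hpow (j : ℕ) : f.coeff j • x ^ j ∈ 𝒜 (j * d) :=
    Submodule.smul_mem _ _ (by simpa using SetLike.pow_mem_graded j hx)
  rw [aeval_eq_sum_range, decompose_sum, DFinsupp.finsetSum_apply,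
    AddSubmonoidClass.coe_finsetSum, Finset.sum_eq_single k]
  · exact decompose_of_mem_same 𝒜 (hpow k)
  · exact fun j _ hjk => decompose_of_mem_ne 𝒜 (hpow j)
      fun h => hjk (Nat.eq_of_mul_eq_mul_right hd h)
  · intro hk
    rw [coeff_eq_zero_of_natDegree_lt (by simpa [Nat.lt_succ_iff] using hk), zero_smul,
      decompose_zero, DirectSum.zero_apply, ZeroMemClass.coe_zero]

variable [Field K] [CommRing A] [Algebra K A] (𝒜 : ℕ → Submodule K A) [GradedAlgebra 𝒜]

theorem ker_aeval_eq_span_X_pow {d : ℕ} (hd : 0 < d) {x : A} (hx : x ∈ 𝒜 d) {n : ℕ}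
    (hxn : x ^ n = 0) (hxk : ∀ k < n, x ^ k ≠ 0) :
    RingHom.ker (aeval (R := K) x) = Ideal.span {X ^ n} := by
  ext f
  rw [RingHom.mem_ker, Ideal.mem_span_singleton]
  refine ⟨fun hf => X_pow_dvd_iff.2 fun k hk => ?_, ?_⟩
  · have hcomp := coe_decompose_aeval_of_mem 𝒜 hd hx f k
    rw [hf, decompose_zero, DirectSum.zero_apply, ZeroMemClass.coe_zero, eq_comm,
      smul_eq_zero] at hcomp
    exact hcomp.resolve_right (hxk k hk)
  · rintro ⟨g, rfl⟩
    simp [hxn]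

theorem exists_injective_quotient_X_pow_algHom {d : ℕ} (hd : 0 < d) {x : A} (hx : x ∈ 𝒜 d)
    {n : ℕ} (hxn : x ^ n = 0) (hxk : ∀ k < n, x ^ k ≠ 0) :
    ∃ e : K[X] ⧸ Ideal.span {(X : K[X]) ^ n} →ₐ[K] A,
      Function.Injective e ∧ ∀ f, e (Ideal.Quotient.mk _ f) = aeval x f := by
  have hker := ker_aeval_eq_span_X_pow 𝒜 hd hx hxn hxk
  exact ⟨Ideal.Quotient.liftₐ _ (aeval x) fun f hf => RingHom.mem_ker.1 (hker.ge hf),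
    RingHom.lift_injective_of_ker_le_ideal _ _ hker.le, fun _ => rfl⟩

theorem exists_eq_aeval_add_smul {d m : ℕ}
    (hdim : ∀ k ≤ m, Module.finrank K (𝒜 (k * d)) = 1)
    (hzero : ∀ i : ℕ, (∀ k ≤ m, i ≠ k * d) → 𝒜 i = ⊥)
    {x : A} (hx : x ∈ 𝒜 d) (hxk : ∀ k < m, x ^ k ≠ 0) {w : A} (hw : w ∈ 𝒜 (m * d))
    (hw0 : w ≠ 0) (a : A) : ∃ (f : K[X]) (c : K), a = aeval x f + c • w := by
  set S := LinearMap.range (aeval x : K[X] →ₐ[K] A).toLinearMap ⊔ K ∙ w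
  have hle (i : ℕ) : 𝒜 i ≤ S := by
    by_cases hi : ∀ k ≤ m, i ≠ k * d
    · simp [hzero i hi]
    push Not at hi
    obtain ⟨k, hk, rfl⟩ := hi
    rcases hk.lt_or_eq with hk | rfl
    · have hxk_mem : x ^ k ∈ 𝒜 (k * d) := by simpa using SetLike.pow_mem_graded k hx
      rw [eq_span_singleton_of_mem_of_finrank_eq_one (hdim k hk.le) hxk_mem (hxk k hk)]
      exact le_sup_of_le_left
        ((Submodule.span_singleton_le_iff_mem _ _).2 ⟨X ^ k, by simp⟩)
    · rw [eq_span_singleton_of_mem_of_finrank_eq_one (hdim k le_rfl) hw hw0]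
      exact le_sup_right
  have ha : a ∈ S := iSup_le hle <|
    (Decomposition.isInternal 𝒜).submodule_iSup_eq_top ▸ Submodule.mem_top
  obtain ⟨_, ⟨f, rfl⟩, _, hz, rfl⟩ := Submodule.mem_sup.1 ha
  obtain ⟨c, rfl⟩ := Submodule.mem_span_singleton.1 hz
  exact ⟨f, c, rfl⟩

end GradedAlgebra

theorem eq_zero_of_mem_of_mul_lt {K A : Type*} [Semiring K] [AddCommMonoid A] [Module K A]
    {𝒜 : ℕ → Submodule K A} {d m : ℕ} (hzero : ∀ i : ℕ, (∀ k ≤ m, i ≠ k * d) → 𝒜 i = ⊥)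
    {i : ℕ} (hi : m * d < i) {a : A} (ha : a ∈ 𝒜 i) : a = 0 := by
  rw [hzero i fun k hk h => by nlinarith [Nat.mul_le_mul_right d hk]] at ha
  exact (Submodule.mem_bot K).1 ha

/-- Let `R` be a graded commutative `F_p`-algebra concentrated in degrees `0, d, 2d, …, md`,
each graded piece one-dimensional, and let `x` be a degree-`d` element with `x^{m-1} ≠ 0`.
Then exactly one of the following holds: (1) `x^m ≠ 0` and `R ≅ F_p[x]/(x^{m+1})` (with the
generator going to `x`); or (2) `x^m = 0` and `R` is the square-zero extension
`F_p[x]/(x^m) ⊕ F_p·w` with `w` of degree `md`, `w·x = 0` and `w² = 0`. -/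
theorem stmt12 (p d m : ℕ) (hp : p.Prime) (hd : 1 ≤ d) (hm : 2 ≤ m)
    (A : Type*) [CommRing A] [Algebra (ZMod p) A]
    (𝒜 : ℕ → Submodule (ZMod p) A) [GradedAlgebra 𝒜]
    (hdim : ∀ k ≤ m, Module.finrank (ZMod p) (𝒜 (k * d)) = 1)
    (hzero : ∀ i : ℕ, (∀ k ≤ m, i ≠ k * d) → 𝒜 i = ⊥)
    (x : A) (hx : x ∈ 𝒜 d) (hxm1 : x ^ (m - 1) ≠ 0) :
    Xor'
      -- (1) `x^m ≠ 0` and `R ≅ F_p[x]/(x^{m+1})`, `x ↦ x`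
      (x ^ m ≠ 0 ∧
        ∃ e : (Polynomial (ZMod p) ⧸
            Ideal.span {(Polynomial.X : Polynomial (ZMod p)) ^ (m + 1)}) ≃ₐ[ZMod p] A,
          e (Ideal.Quotient.mk _ Polynomial.X) = x)
      -- (2) `x^m = 0` and `R` is the square-zero extension `F_p[x]/(x^m) ⊕ F_p·w`
      (x ^ m = 0 ∧
        ∃ w ∈ 𝒜 (m * d), w ≠ 0 ∧ w * x = 0 ∧ w * w = 0 ∧
          ∃ e : (Polynomial (ZMod p) ⧸
              Ideal.span {(Polynomial.X : Polynomial (ZMod p)) ^ m}) →ₐ[ZMod p] A,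
            Function.Injective e ∧ e (Ideal.Quotient.mk _ Polynomial.X) = x ∧
            ∀ a : A, ∃ (q : Polynomial (ZMod p) ⧸
                Ideal.span {(Polynomial.X : Polynomial (ZMod p)) ^ m}) (c : ZMod p),
              a = e q + c • w) := by
  have : Fact p.Prime := ⟨hp⟩
  have hpow (k : ℕ) : x ^ k ∈ 𝒜 (k * d) := by simpa using SetLike.pow_mem_graded k hx
  have hxk : ∀ k < m, x ^ k ≠ 0 := fun k hk h => hxm1 (pow_eq_zero_of_le (by omega) h)
  have hmd : 0 < m * d := Nat.mul_pos (by omega) hd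
  by_cases hxm : x ^ m = 0
  · obtain ⟨w, hw, hw0⟩ : ∃ w ∈ 𝒜 (m * d), w ≠ 0 :=
      Submodule.exists_mem_ne_zero_of_ne_bot fun h => by
        have h1 := hdim m le_rfl
        rw [h, finrank_bot] at h1
        exact zero_ne_one h1
    obtain ⟨e, he_inj, he⟩ := exists_injective_quotient_X_pow_algHom 𝒜 hd hx hxm hxk
    refine Or.inr ⟨⟨hxm, w, hw, hw0,
      eq_zero_of_mem_of_mul_lt hzero (by omega) (SetLike.mul_mem_graded hw hx),
      eq_zero_of_mem_of_mul_lt hzero (by omega) (SetLike.mul_mem_graded hw hw),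
      e, he_inj, by rw [he, aeval_X], fun a => ?_⟩, fun h => h.1 hxm⟩
    obtain ⟨f, c, rfl⟩ := exists_eq_aeval_add_smul 𝒜 hdim hzero hx hxk hw hw0 a
    exact ⟨Ideal.Quotient.mk _ f, c, by rw [he]⟩
  · have hxm_succ : x ^ (m + 1) = 0 := eq_zero_of_mem_of_mul_lt hzero (by nlinarith) (hpow (m + 1))
    obtain ⟨e, he_inj, he⟩ := exists_injective_quotient_X_pow_algHom 𝒜 hd hx hxm_succ fun k hk =>
      (Nat.lt_succ_iff.1 hk).lt_or_eq.elim (hxk k) (· ▸ hxm)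
    have he_surj : Function.Surjective e := fun a => by
      obtain ⟨f, c, rfl⟩ := exists_eq_aeval_add_smul 𝒜 hdim hzero hx hxk (hpow m) hxm a
      exact ⟨Ideal.Quotient.mk _ (f + C c * X ^ m), by simp [he, Algebra.smul_def]⟩
    exact Or.inl ⟨⟨hxm, AlgEquiv.ofBijective e ⟨he_inj, he_surj⟩, he X ▸ aeval_X x⟩,
      fun h => hxm h.1⟩
end
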